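/- arXiv:1610.05250 — 2 statements merged into one kernel-verified Lean document; each statement's English description precedes it below -/
import Mathlib

section
/- For every even integer n ≥ 4, the upper broadcast domination number of the cycle C_n equals n − 2: Γ_b(C_n) = n − 2. -/
open SimpleGraph Finset

/-- `S` is a dominating set of `G`: every vertex is in `S` or adjacent to a vertex of `S`. -/
def Dominates {V : Type*} (G : SimpleGraph V) (S : Finset V) : Prop :=
  ∀ v : V, v ∈ S ∨ ∃ u ∈ S, G.Adj v u

/-- `S` is a minimal dominating set: it dominates and no proper subset dominates. -/
def MinimalDominating {V : Type*} (G : SimpleGraph V) (S : Finset V) : Prop :=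
  Dominates G S ∧ ∀ S' : Finset V, S' ⊂ S → ¬ Dominates G S'

/-- The upper domination number `Γ(G)`: maximum cardinality of a minimal dominating set. -/
noncomputable def upperDomination {V : Type*} (G : SimpleGraph V) : ℕ :=
  sSup {k : ℕ | ∃ S : Finset V, MinimalDominating G S ∧ S.card = k}

/-- The domination number `γ(G)`: minimum cardinality of a dominating set. -/
noncomputable def domNumber {V : Type*} (G : SimpleGraph V) : ℕ :=
  sInf {k : ℕ | ∃ S : Finset V, Dominates G S ∧ S.card = k}

/-- The eccentricity of `v` : maximum distance to any other vertex. -/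
noncomputable def eccent {V : Type*} [Fintype V] (G : SimpleGraph V) (v : V) : ℕ :=
  Finset.univ.sup (fun u => G.dist v u)

/-- The diameter of `G` : maximum eccentricity. -/
noncomputable def gDiam {V : Type*} [Fintype V] (G : SimpleGraph V) : ℕ :=
  Finset.univ.sup (fun v => eccent G v)

/-- A broadcast on `G`: `f v ≤ e(v)` for all `v`. -/
def IsBroadcast {V : Type*} [Fintype V] (G : SimpleGraph V) (f : V → ℕ) : Prop :=
  ∀ v : V, f v ≤ _root_.eccent G v

/-- A broadcast `f` dominates `G` if every vertex hears some broadcasting vertex. -/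
def BroadcastDominates {V : Type*} (G : SimpleGraph V) (f : V → ℕ) : Prop :=
  ∀ u : V, ∃ v : V, 1 ≤ f v ∧ G.dist u v ≤ f v

/-- A minimal dominating broadcast: no broadcast `g ≤ f` with `g ≠ f` dominates `G`. -/
def MinimalDominatingBroadcast {V : Type*} [Fintype V] (G : SimpleGraph V) (f : V → ℕ) : Prop :=
  IsBroadcast G f ∧ BroadcastDominates G f ∧
    ∀ g : V → ℕ, IsBroadcast G g → g ≤ f → g ≠ f → ¬ BroadcastDominates G g

/-- The cost of a broadcast. -/
def cost {V : Type*} [Fintype V] (f : V → ℕ) : ℕ := ∑ v, f v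

/-- The upper broadcast domination number `Γ_b(G)`. -/
noncomputable def upperBroadcast {V : Type*} [Fintype V] (G : SimpleGraph V) : ℕ :=
  sSup {k : ℕ | ∃ f : V → ℕ, MinimalDominatingBroadcast G f ∧ cost f = k}

/-- The broadcast domination number `γ_b(G)`. -/
noncomputable def broadcastDomNumber {V : Type*} [Fintype V] (G : SimpleGraph V) : ℕ :=
  sInf {k : ℕ | ∃ f : V → ℕ, IsBroadcast G f ∧ BroadcastDominates G f ∧ cost f = k}

/-!
Distances in `C_n` are `min(|i - j|, n - |i - j|)`, so the ball of radius `r < n / 2` around `v`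
is the arc `{v + a : |a| ≤ r}` with `2r + 1` vertices. By minimality, every broadcasting vertex `v`
has a private vertex `p v` that hears only `v`. If at least two vertices broadcast, then each
`f v < n / 2`, every vertex hears at most two broadcasters (three arcs through `x` with private
points are impossible) and a private vertex hears exactly one. Double counting the pairs
(vertex, broadcaster it hears) gives `2 σ(f) + |V⁺| ≤ 2n - |V⁺|`, so `σ(f) ≤ n - 2`; a single
broadcaster costs at most its eccentricity `n / 2`. Conversely, on `C_{2m}` two adjacent vertices
broadcasting with strength `m - 1` form a minimal dominating broadcast of cost `2m - 2`.
-/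

open scoped Fin.IntCast Fin.CommRing

section Broadcast

variable {V : Type*} {G : SimpleGraph V} {f : V → ℕ}

def HearsOnly (G : SimpleGraph V) (f : V → ℕ) (w v : V) : Prop :=
  G.dist w v ≤ f v ∧ ∀ u ≠ v, 1 ≤ f u → f u < G.dist w u

lemma HearsOnly.unique {w v v' : V} (h : HearsOnly G f w v) (h' : HearsOnly G f w v')
    (hv : 1 ≤ f v) : v = v' := by
  by_contra hne
  exact (h'.2 v hne hv).not_ge h.1

variable [Fintype V]

def broadcasters (f : V → ℕ) : Finset V := {v | 1 ≤ f v}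

@[simp]
lemma mem_broadcasters {v : V} : v ∈ broadcasters f ↔ 1 ≤ f v := by
  simp [broadcasters]

lemma cost_eq_sum_broadcasters (f : V → ℕ) : cost f = ∑ v ∈ broadcasters f, f v :=
  (sum_filter_of_ne fun _ _ h => Nat.one_le_iff_ne_zero.2 h).symm

noncomputable def heard (G : SimpleGraph V) (f : V → ℕ) (x : V) : Finset V :=
  {v ∈ broadcasters f | G.dist x v ≤ f v}

lemma sum_card_heard (G : SimpleGraph V) (f : V → ℕ) :
    ∑ x, #(heard G f x) = ∑ v ∈ broadcasters f, #{x | G.dist x v ≤ f v} :=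
  (sum_card_bipartiteAbove_eq_sum_card_bipartiteBelow _).symm

lemma HearsOnly.heard_subset {w v : V} (h : HearsOnly G f w v) : heard G f w ⊆ {v} :=
  fun u hu => by
    rw [heard, mem_filter, mem_broadcasters] at hu
    by_contra huv
    exact (h.2 u (mem_singleton.not.1 huv) hu.1).not_ge hu.2

lemma IsBroadcast.mono {g : V → ℕ} (hf : IsBroadcast G f) (hgf : g ≤ f) : IsBroadcast G g :=
  fun v => (hgf v).trans (hf v)

lemma MinimalDominatingBroadcast.exists_hearsOnly (hf : MinimalDominatingBroadcast G f) {v : V}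
    (hv : 1 ≤ f v) : ∃ w, HearsOnly G f w v := by
  classical
  set g := Function.update f v (f v - 1)
  have hgf : g ≤ f := fun u => by
    rcases eq_or_ne u v with rfl | hu <;> simp [g, *]
  have hgne : g ≠ f := fun h => by
    have := congrFun h v
    simp only [g, Function.update_self] at this
    omega
  obtain ⟨w, hw⟩ : ∃ w, ∀ u, 1 ≤ g u → g u < G.dist w u := by
    simpa [BroadcastDominates] using hf.2.2 g (hf.1.mono hgf) hgf hgne
  have hw' : ∀ u ≠ v, 1 ≤ f u → f u < G.dist w u := fun u hu => by
    simpa [g, hu] using hw u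
  refine ⟨w, ?_, hw'⟩
  obtain ⟨z, hz, hwz⟩ := hf.2.1 w
  rcases eq_or_ne z v with rfl | hzv
  · exact hwz
  · exact absurd hwz (hw' z hzv hz).not_ge

lemma MinimalDominatingBroadcast.of_forall_exists_hearsOnly (hdom : BroadcastDominates G f)
    (hpriv : ∀ v, 1 ≤ f v → ∃ w, HearsOnly G f w v ∧ G.dist w v = f v) :
    MinimalDominatingBroadcast G f := by
  refine ⟨fun v => ?_, hdom, fun g _ hgf hgne hgdom => ?_⟩
  · rcases Nat.eq_zero_or_pos (f v) with h | h
    · simp [h]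
    · obtain ⟨w, -, hw⟩ := hpriv v h
      exact hw.symm.le.trans (dist_comm.trans_le (le_sup (mem_univ w)))
  · obtain ⟨v, hv⟩ := Function.ne_iff.1 hgne
    have hlt : g v < f v := (hgf v).lt_of_ne hv
    obtain ⟨w, ⟨-, hw⟩, hwv⟩ := hpriv v (by omega)
    obtain ⟨z, hz, hwz⟩ := hgdom w
    rcases eq_or_ne z v with rfl | hzv
    · omega
    · exact (hw z hzv (hz.trans (hgf z))).not_ge (hwz.trans (hgf z))

end Broadcast

lemma Fin.eq_of_intCast_eq {n : ℕ} [NeZero n] {a b : ℤ} (h : (a : Fin n) = b)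
    (hab : (b - a).natAbs < n) : a = b := by
  have hdvd : (n : ℤ) ∣ b - a := ((CharP.intCast_eq_intCast (Fin n) n).1 h).dvd
  linarith [Int.eq_zero_of_dvd_of_natAbs_lt_natAbs hdvd (by simpa using hab)]

namespace SimpleGraph

variable {n : ℕ} [NeZero n]

lemma cycleGraph_dist_add_one_le (x : Fin n) : (cycleGraph n).dist x (x + 1) ≤ 1 := by
  rcases (NeZero.one_le : 1 ≤ n).eq_or_lt with rfl | hn
  · simp
  · refine (dist_eq_one_iff_adj.2 ?_).le
    rw [cycleGraph_adj', add_sub_cancel_left, Fin.val_one', Nat.mod_eq_of_lt hn]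
    exact Or.inr rfl

lemma cycleGraph_dist_add_natCast_le (x : Fin n) (k : ℕ) :
    (cycleGraph n).dist x (x + k) ≤ k := by
  induction k with
  | zero => simp
  | succ k ih =>
    calc (cycleGraph n).dist x (x + (k + 1 : ℕ))
        ≤ (cycleGraph n).dist x (x + k) + (cycleGraph n).dist (x + k) (x + k + 1) := by
          rw [Nat.cast_succ, ← add_assoc]
          exact (cycleGraph_preconnected _ _).dist_triangle_right x
      _ ≤ k + 1 := add_le_add ih (cycleGraph_dist_add_one_le _)

lemma eq_add_one_of_cycleGraph_adj {x y : Fin n} (h : (cycleGraph n).Adj x y) :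
    x = y + 1 ∨ y = x + 1 := by
  have key : ∀ a b : Fin n, (a - b).val = 1 → a = b + 1 := fun a b hab => by
    have : a - b = 1 := Fin.ext (by rw [hab, Fin.val_one', Nat.mod_eq_of_lt (hab ▸ (a - b).isLt)])
    rw [← this, add_sub_cancel]
  exact (cycleGraph_adj'.1 h).imp (key x y) (key y x)

lemma exists_intCast_of_cycleGraph_walk {x v : Fin n} (p : (cycleGraph n).Walk x v) :
    ∃ a : ℤ, a.natAbs ≤ p.length ∧ v + a = x := by
  induction p with
  | nil => exact ⟨0, by simp⟩
  | cons hadj _ ih =>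
    obtain ⟨a, ha, rfl⟩ := ih
    rcases eq_add_one_of_cycleGraph_adj hadj with rfl | h
    · exact ⟨a + 1, by rw [Walk.length_cons]; omega, by push_cast; ring⟩
    · exact ⟨a - 1, by rw [Walk.length_cons]; omega, by push_cast; linear_combination h⟩

theorem cycleGraph_dist_le_iff {x v : Fin n} {r : ℕ} :
    (cycleGraph n).dist x v ≤ r ↔ ∃ a : ℤ, a.natAbs ≤ r ∧ v + a = x := by
  constructor
  · intro h
    obtain ⟨p, hp⟩ := (cycleGraph_preconnected x v).exists_walk_length_eq_dist
    obtain ⟨a, ha, hx⟩ := exists_intCast_of_cycleGraph_walk p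
    exact ⟨a, by omega, hx⟩
  · rintro ⟨a, ha, rfl⟩
    obtain ⟨k, rfl | rfl⟩ := Int.eq_nat_or_neg a
    · rw [dist_comm, Int.cast_natCast]
      exact (cycleGraph_dist_add_natCast_le v k).trans (by simpa using ha)
    · have := cycleGraph_dist_add_natCast_le (v - (k : Fin n)) k
      rw [sub_add_cancel] at this
      simpa [sub_eq_add_neg] using this.trans (by simpa using ha)

theorem cycleGraph_dist_eq (u v : Fin n) :
    (cycleGraph n).dist u v = min ((u : ℤ) - v).natAbs (n - ((u : ℤ) - v).natAbs) := by
  have hcast : ∀ w : Fin n, (((w : ℕ) : ℤ) : Fin n) = w := fun w => by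
    rw [Int.cast_natCast, Fin.cast_val_eq_self]
  have hu := u.isLt
  have hv := v.isLt
  refine le_antisymm (le_min ?_ ?_) ?_
  · refine cycleGraph_dist_le_iff.2 ⟨(u : ℤ) - v, le_rfl, ?_⟩
    rw [Int.cast_sub, hcast, hcast, add_sub_cancel]
  · refine cycleGraph_dist_le_iff.2 ?_
    rcases le_or_gt v.val u.val with h | h
    · refine ⟨(u : ℤ) - v - n, by omega, ?_⟩
      rw [Int.cast_sub, Int.cast_sub, hcast, hcast, Int.cast_natCast, Fin.natCast_self]
      ring
    · refine ⟨(u : ℤ) - v + n, by omega, ?_⟩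
      rw [Int.cast_add, Int.cast_sub, hcast, hcast, Int.cast_natCast, Fin.natCast_self]
      ring
  · by_contra! h
    obtain ⟨a, ha, hau⟩ := (cycleGraph_dist_le_iff (x := u) (v := v)).1 le_rfl
    have : (v : ℤ) + a = u :=
      Fin.eq_of_intCast_eq (n := n) (by rw [Int.cast_add, hcast, hcast, hau]) (by omega)
    omega

lemma cycleGraph_dist_le_half (u v : Fin n) : (cycleGraph n).dist u v ≤ n / 2 := by
  rw [cycleGraph_dist_eq]
  omega

lemma card_cycleGraph_dist_le (v : Fin n) {r : ℕ} (hr : 2 * r + 1 ≤ n) :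
    #{x | (cycleGraph n).dist x v ≤ r} = 2 * r + 1 := by
  have hball : ({x | (cycleGraph n).dist x v ≤ r} : Finset (Fin n)) =
      (Icc (-r : ℤ) r).image fun a : ℤ => v + (a : Fin n) := by
    ext x
    simp only [mem_filter, mem_univ, true_and, mem_image, mem_Icc, cycleGraph_dist_le_iff]
    constructor <;> rintro ⟨a, ha, rfl⟩ <;> exact ⟨a, by omega, rfl⟩
  rw [hball, card_image_of_injOn, Int.card_Icc]
  · omega
  · intro a ha b hb hab
    simp only [coe_Icc, Set.mem_Icc] at ha hb
    exact Fin.eq_of_intCast_eq (n := n) (add_left_cancel hab) (by omega)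

end SimpleGraph

section Cycle

variable {n : ℕ} [NeZero n] {f : Fin n → ℕ}

/-- Write `x = v + a v` and `p v = v + b v` with `|a v|, |b v| ≤ f v`. If the offsets `b - a` of
the private vertices of two broadcasters heard by `x` had the same sign, the one nearer to `x`
would lie in the other arc. -/
lemma card_heard_cycleGraph_le_two {p : Fin n → Fin n}
    (hp : ∀ v ∈ broadcasters f, HearsOnly (cycleGraph n) f (p v) v) (x : Fin n) :
    #(heard (cycleGraph n) f x) ≤ 2 := by
  set S := heard (cycleGraph n) f x
  have hS : ∀ v ∈ S, v ∈ broadcasters f ∧ (cycleGraph n).dist x v ≤ f v := fun v hv =>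
    mem_filter.1 hv
  choose! a ha hxa using fun v hv => cycleGraph_dist_le_iff.1 (hS v hv).2
  choose! b hb hpb using fun v hv => cycleGraph_dist_le_iff.1 (hp v (hS v hv).1).1
  have key : ∀ v ∈ S, ∀ w ∈ S, v ≠ w → (0 ≤ b v - a v ↔ 0 ≤ b w - a w) →
      (b v - a v).natAbs ≤ (b w - a w).natAbs → False := by
    intro v hv w hw hvw hsign hle
    refine ((hp v (hS v hv).1).2 w hvw.symm (mem_broadcasters.1 (hS w hw).1)).not_ge
      (cycleGraph_dist_le_iff.2 ⟨a w + (b v - a v), ?_, ?_⟩)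
    · have := ha w hw
      have := hb w hw
      omega
    · rw [← hpb v hv]
      push_cast
      linear_combination hxa w hw - hxa v hv
  by_contra! hS2
  obtain ⟨v, hv, w, hw, hvw, hsign⟩ := exists_ne_map_eq_of_card_lt_of_maps_to
    (t := (univ : Finset Bool)) (f := fun v => decide (0 ≤ b v - a v)) (by simpa using hS2)
    (fun _ _ => mem_coe.2 (mem_univ _))
  simp only [decide_eq_decide] at hsign
  rcases le_total (b v - a v).natAbs (b w - a w).natAbs with h | h
  · exact key v hv w hw hvw hsign h
  · exact key w hw v hv hvw.symm hsign.symm h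

lemma MinimalDominatingBroadcast.cost_add_card_le_cycleGraph
    (hf : MinimalDominatingBroadcast (cycleGraph n) f) (hB : 1 < #(broadcasters f)) :
    cost f + #(broadcasters f) ≤ n := by
  set B := broadcasters f
  choose! p hp using fun v (hv : v ∈ B) => hf.exists_hearsOnly (mem_broadcasters.1 hv)
  have hsmall : ∀ v ∈ B, 2 * f v + 1 ≤ n := fun v hv => by
    obtain ⟨u, hu, huv⟩ := exists_mem_ne hB v
    have := (hp u hu).2 v huv.symm (mem_broadcasters.1 hv)
    have := cycleGraph_dist_le_half (p u) v
    omega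
  have hinj : Set.InjOn p B := fun v hv w hw hvw =>
    (hp v hv).unique (hvw ▸ hp w hw) (mem_broadcasters.1 hv)
  have hcount : ∀ x, #(heard (cycleGraph n) f x) + (if x ∈ B.image p then 1 else 0) ≤ 2 := by
    intro x
    split_ifs with hx
    · obtain ⟨v, hv, rfl⟩ := mem_image.1 hx
      have := (card_le_card (hp v hv).heard_subset).trans_eq (card_singleton v)
      omega
    · simpa using card_heard_cycleGraph_le_two hp x
  have : 2 * cost f + #B + #B ≤ 2 * n :=
    calc 2 * cost f + #B + #B
        = ∑ x, (#(heard (cycleGraph n) f x) + if x ∈ B.image p then 1 else 0) := by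
          rw [sum_add_distrib, sum_boole, filter_mem_eq_inter, univ_inter,
            card_image_of_injOn hinj, Nat.cast_id, sum_card_heard,
            sum_congr rfl fun v hv => card_cycleGraph_dist_le v (hsmall v hv), sum_add_distrib,
            ← mul_sum, cost_eq_sum_broadcasters, card_eq_sum_ones]
      _ ≤ ∑ _ : Fin n, 2 := sum_le_sum fun x _ => hcount x
      _ = 2 * n := by simp [mul_comm]
  omega

theorem MinimalDominatingBroadcast.cost_le_cycleGraph (hn : 3 ≤ n) {f : Fin n → ℕ}
    (hf : MinimalDominatingBroadcast (cycleGraph n) f) : cost f ≤ n - 2 := by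
  rcases lt_or_ge 1 #(broadcasters f) with hB | hB
  · have := hf.cost_add_card_le_cycleGraph hB
    omega
  · obtain ⟨v, hv, -⟩ := hf.2.1 0
    have hB : broadcasters f = {v} := eq_singleton_iff_unique_mem.2
      ⟨mem_broadcasters.2 hv, fun w hw => card_le_one.1 hB w hw v (mem_broadcasters.2 hv)⟩
    have hecc : _root_.eccent (cycleGraph n) v ≤ n / 2 :=
      Finset.sup_le fun u _ => cycleGraph_dist_le_half v u
    rw [cost_eq_sum_broadcasters, hB, sum_singleton]
    have := hf.1 v
    omega

theorem exists_minimalDominatingBroadcast_cycleGraph_cost_eq (hn : 4 ≤ n) (hev : Even n) :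
    ∃ f : Fin n → ℕ, MinimalDominatingBroadcast (cycleGraph n) f ∧ cost f = n - 2 := by
  obtain ⟨m, hm⟩ := hev
  let f : Fin n → ℕ := fun v => if v.val ≤ 1 then m - 1 else 0
  refine ⟨f, .of_forall_exists_hearsOnly (fun u => ?_) fun v hv => ?_, ?_⟩
  · refine ⟨⟨if u.val = m then 1 else 0, by split_ifs <;> omega⟩, ?_, ?_⟩ <;>
      simp only [f, cycleGraph_dist_eq] <;> split_ifs <;> omega
  · -- `m + 1 - v` is antipodal to the other broadcaster `1 - v`.
    have hdist : (cycleGraph n).dist ⟨m + 1 - v.val, by omega⟩ v = f v := by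
      simp only [f, cycleGraph_dist_eq] at hv ⊢
      split_ifs at hv ⊢ <;> omega
    refine ⟨_, ⟨hdist.le, fun u huv hu => ?_⟩, hdist⟩
    have := Fin.val_ne_iff.2 huv
    simp only [f, cycleGraph_dist_eq] at hv hu ⊢
    split_ifs at hv hu ⊢ <;> omega
  · have hsupp : ∑ i ∈ range n, (if i ≤ 1 then m - 1 else 0) =
        ∑ i ∈ range 2, (if i ≤ 1 then m - 1 else 0) :=
      (sum_subset (range_subset_range.2 (by omega)) fun i _ hi => by
        rw [mem_range] at hi
        rw [if_neg (by omega)]).symm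
    rw [cost, Fin.sum_univ_eq_sum_range (fun i => if i ≤ 1 then m - 1 else 0), hsupp]
    simp only [sum_range_succ, range_one, sum_singleton, zero_le, ↓reduceIte, le_refl]
    omega

end Cycle

/-- For every even `n ≥ 4`, `Γ_b(C_n) = n - 2`. -/
theorem upperBroadcast_cycle_even (n : ℕ) (hn : 4 ≤ n) (hev : Even n) :
    upperBroadcast (cycleGraph n) = n - 2 := by
  have : NeZero n := ⟨by omega⟩
  refine IsGreatest.csSup_eq ⟨exists_minimalDominatingBroadcast_cycleGraph_cost_eq hn hev, ?_⟩
  rintro _ ⟨f, hf, rfl⟩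
  exact hf.cost_le_cycleGraph (by omega)
end

section
/- Let T be a finite tree and let D be a diametral path of T. If some vertex v on D has at least three distinct neighbors that do not lie on D (i.e. at least three protrusions from v), then Γ_b(T) > diam(T); in particular T is not diametrical. -/
open SimpleGraph Finset

/-!
Fix an edge `PC` of a tree and let `B` be the branch at `C`, the side of the edge containing `C`.
By recursion on `|B|` there is a broadcast that dominates `B`, reaches nothing outside `B ∪ {P}`,
costs at least the height of `B` above `C`, and gives every broadcasting vertex a private witness
in `B`: a vertex that no other broadcasting vertex reaches and that the vertex itself reaches only
at full power. If `B = {C}`, let `C` broadcast `1`. If `C` has a leaf child, add up the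
broadcasts of all child branches; the leaf also covers `C`. Otherwise the vertex `z ∈ B` farthest
from `C` broadcasts `d(z, C)`, with private witness `C`, and the branches hanging just outside
this ball are treated recursively. Broadcasts with disjoint supports, each out of reach of the
others' private witnesses, add up to a broadcast with the same private witnesses.

At the vertex `v` of the diametral path `a … b`, let `u₁` broadcast `1`, which covers `v` (the
branches beyond distance one from `u₁` are treated as above), and put such branch broadcasts on
the branches at all other neighbours of `v`. The sum is a minimal dominating broadcast. The
branches towards `a` and `b` cost at least `d(a, v) - 1` and `d(v, b) - 1`, those at `u₂` and
`u₃` at least `1`, so the total cost is at least `1 + (d(a, v) - 1) + (d(v, b) - 1) + 2`,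
which is `diam T + 1`.
-/

section Broadcast

variable {V : Type*} (G : SimpleGraph V)

def Hears (f : V → ℕ) (w x : V) : Prop := f x ≠ 0 ∧ G.dist w x ≤ f x

/-- `w` certifies that `x` cannot lower its power: no other vertex of `f` reaches `w`, and any
power of `x` below `f x` misses `w` (or is `0`). -/
def IsPrivateWitness (f : V → ℕ) (x w : V) : Prop :=
  (f x = 1 ∨ f x ≤ G.dist w x) ∧ ∀ y, y ≠ x → ¬ Hears G f w y

variable {G}

lemma broadcastDominates_iff {f : V → ℕ} :
    BroadcastDominates G f ↔ ∀ u, ∃ x, Hears G f u x := by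
  simp only [BroadcastDominates, Hears, Nat.one_le_iff_ne_zero]

lemma hears_single_iff [DecidableEq V] {z w x : V} {r : ℕ} :
    Hears G (Pi.single z r) w x ↔ x = z ∧ r ≠ 0 ∧ G.dist w z ≤ r := by
  by_cases hx : x = z
  · subst hx; simp [Hears]
  · simp [Hears, hx]

lemma dist_le_eccent [Fintype V] (x w : V) : G.dist x w ≤ _root_.eccent G x :=
  Finset.le_sup (f := fun u => G.dist x u) (Finset.mem_univ w)

lemma dist_le_gDiam [Fintype V] (x w : V) : G.dist x w ≤ gDiam G :=
  (dist_le_eccent x w).trans (Finset.le_sup (f := fun v => _root_.eccent G v) (Finset.mem_univ x))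

/-- A vertex broadcasting beyond its eccentricity would reach the private witness of any other
broadcasting vertex. -/
lemma isBroadcast_of_isPrivateWitness [Fintype V] {f : V → ℕ}
    (hpriv : ∀ x, f x ≠ 0 → ∃ w, IsPrivateWitness G f x w)
    (htwo : ∀ x, f x ≠ 0 → ∃ y ≠ x, f y ≠ 0) : IsBroadcast G f := by
  intro x
  by_contra! hx
  obtain ⟨y, hyx, hy⟩ := htwo x (by omega)
  obtain ⟨w, -, hw⟩ := hpriv y hy
  refine hw x hyx.symm ⟨by omega, ?_⟩
  rw [dist_comm]
  exact (dist_le_eccent x w).trans hx.le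

lemma minimalDominatingBroadcast_of_isPrivateWitness [Fintype V] {f : V → ℕ}
    (hdom : ∀ u, ∃ x, Hears G f u x) (hpriv : ∀ x, f x ≠ 0 → ∃ w, IsPrivateWitness G f x w)
    (htwo : ∀ x, f x ≠ 0 → ∃ y ≠ x, f y ≠ 0) : MinimalDominatingBroadcast G f := by
  refine ⟨isBroadcast_of_isPrivateWitness hpriv htwo, broadcastDominates_iff.2 hdom, ?_⟩
  intro g _ hgf hne hg
  obtain ⟨x, hx⟩ : ∃ x, g x < f x := by
    by_contra! h
    exact hne (le_antisymm hgf h)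
  obtain ⟨w, hfx, hw⟩ := hpriv x (by omega)
  obtain ⟨y, hy, hwy⟩ := broadcastDominates_iff.1 hg w
  by_cases hyx : y = x
  · subst hyx
    omega
  · have hgfy : g y ≤ f y := hgf y
    exact hw y hyx ⟨by omega, hwy.trans hgfy⟩

lemma cost_le_upperBroadcast [Fintype V] {f : V → ℕ} (hf : MinimalDominatingBroadcast G f) :
    cost f ≤ upperBroadcast G :=
  le_csSup ⟨∑ x, _root_.eccent G x, by
    rintro _ ⟨g, hg, rfl⟩
    exact Finset.sum_le_sum fun x _ => hg.1 x⟩ ⟨f, hf, rfl⟩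

lemma le_cost [Fintype V] (f : V → ℕ) (x : V) : f x ≤ cost f :=
  Finset.single_le_sum (fun _ _ => Nat.zero_le _) (Finset.mem_univ x)

lemma cost_sum [Fintype V] {ι : Type*} (s : Finset ι) (f : ι → V → ℕ) :
    cost (∑ i ∈ s, f i) = ∑ i ∈ s, cost (f i) := by
  simp only [cost, Finset.sum_apply]
  exact Finset.sum_comm

end Broadcast

section DisjointSum

variable {V : Type*} {G : SimpleGraph V}

lemma hears_add_iff {f g : V → ℕ} (hfg : Disjoint (Function.support f) (Function.support g))
    {w x : V} : Hears G (f + g) w x ↔ Hears G f w x ∨ Hears G g w x := by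
  have : f x = 0 ∨ g x = 0 := by
    by_contra! h
    exact Set.disjoint_left.1 hfg h.1 h.2
  rcases this with h | h <;> simp [Hears, h]

lemma IsPrivateWitness.add {f g : V → ℕ} (hfg : Disjoint (Function.support f) (Function.support g))
    {x w : V} (hx : f x ≠ 0) (hw : IsPrivateWitness G f x w) (hg : ∀ y, ¬ Hears G g w y) :
    IsPrivateWitness G (f + g) x w := by
  have hgx : g x = 0 := by
    by_contra h
    exact Set.disjoint_left.1 hfg hx h
  refine ⟨by simpa [hgx] using hw.1, fun y hyx hy => ?_⟩
  rcases (hears_add_iff hfg).1 hy with h | h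
  exacts [hw.2 y hyx h, hg y h]

variable {ι : Type*} {s : Finset ι} {f : ι → V → ℕ}

lemma sum_apply_eq_of_ne_zero (hdisj : (s : Set ι).PairwiseDisjoint fun i => Function.support (f i))
    {i : ι} (hi : i ∈ s) {x : V} (hx : f i x ≠ 0) : (∑ j ∈ s, f j) x = f i x := by
  rw [Finset.sum_apply]
  refine Finset.sum_eq_single_of_mem i hi fun j hj hji => ?_
  by_contra h
  exact Set.disjoint_left.1 (hdisj hj hi hji) h hx

lemma hears_sum_iff (hdisj : (s : Set ι).PairwiseDisjoint fun i => Function.support (f i))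
    {w x : V} : Hears G (∑ i ∈ s, f i) w x ↔ ∃ i ∈ s, Hears G (f i) w x := by
  constructor
  · rintro ⟨hx, hwx⟩
    rw [Finset.sum_apply] at hx
    obtain ⟨i, hi, hix⟩ := Finset.exists_ne_zero_of_sum_ne_zero hx
    rw [sum_apply_eq_of_ne_zero hdisj hi hix] at hwx
    exact ⟨i, hi, hix, hwx⟩
  · rintro ⟨i, hi, hix, hwx⟩
    rw [Hears, sum_apply_eq_of_ne_zero hdisj hi hix]
    exact ⟨hix, hwx⟩

lemma IsPrivateWitness.sum (hdisj : (s : Set ι).PairwiseDisjoint fun i => Function.support (f i))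
    {i : ι} (hi : i ∈ s) {x w : V} (hx : f i x ≠ 0) (hw : IsPrivateWitness G (f i) x w)
    (hothers : ∀ j ∈ s, j ≠ i → ∀ y, ¬ Hears G (f j) w y) :
    IsPrivateWitness G (∑ j ∈ s, f j) x w := by
  refine ⟨by rw [sum_apply_eq_of_ne_zero hdisj hi hx]; exact hw.1, fun y hyx hy => ?_⟩
  obtain ⟨j, hj, hjy⟩ := (hears_sum_iff hdisj).1 hy
  by_cases hji : j = i
  · subst hji
    exact hw.2 y hyx hjy
  · exact hothers j hj hji y hjy

end DisjointSum

namespace SimpleGraph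

section Metric

variable {V : Type*} {G : SimpleGraph V}

lemma dist_add_dist_of_mem_support {u v y : V} {p : G.Walk u v} (hp : p.length = G.dist u v)
    (hy : y ∈ p.support) : G.dist u y + G.dist y v = G.dist u v := by
  classical
  have hsplit := congrArg Walk.length (p.take_spec hy)
  rw [Walk.length_append] at hsplit
  have h₁ := G.dist_le (p.takeUntil y hy)
  have h₂ := G.dist_le (p.dropUntil y hy)
  have h₃ := (p.takeUntil y hy).reachable.dist_triangle_left v
  omega

lemma Connected.exists_dist_eq_of_le (hG : G.Connected) {w z : V} {k : ℕ}
    (hk : k ≤ G.dist w z) : ∃ y, G.dist w y = k ∧ G.dist y z = G.dist w z - k := by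
  obtain ⟨p, -, hp⟩ := hG.exists_path_of_dist w z
  have h₁ := G.dist_le (p.take k)
  have h₂ := G.dist_le (p.drop k)
  have h₃ := hG.dist_triangle (u := w) (v := p.getVert k) (w := z)
  simp only [Walk.take_length, Walk.drop_length] at h₁ h₂
  exact ⟨p.getVert k, by omega, by omega⟩

lemma Connected.exists_adj_dist_add_one_eq (hG : G.Connected) {w z : V} (hwz : w ≠ z) :
    ∃ y, G.Adj w y ∧ G.dist y z + 1 = G.dist w z := by
  have hpos := hG.pos_dist_of_ne hwz
  obtain ⟨y, hwy, hyz⟩ := hG.exists_dist_eq_of_le (w := w) (z := z) (k := 1) hpos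
  exact ⟨y, dist_eq_one_iff_adj.1 hwy, by omega⟩

variable {T : SimpleGraph V}

lemma IsTree.length_eq_dist (hT : T.IsTree) {u v : V} {p : T.Walk u v} (hp : p.IsPath) :
    p.length = T.dist u v := by
  obtain ⟨q, hq, hql⟩ := hT.connected.exists_path_of_dist u v
  have : p = q := congrArg Subtype.val ((hT.isAcyclic.subsingleton_path u v).elim ⟨p, hp⟩ ⟨q, hq⟩)
  rw [this, hql]

lemma IsTree.mem_support_of_dist_add_dist (hT : T.IsTree) {u v y : V} {p : T.Walk u v}
    (hp : p.IsPath) (hy : T.dist u y + T.dist y v = T.dist u v) : y ∈ p.support := by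
  obtain ⟨q₁, -, hq₁⟩ := hT.connected.exists_path_of_dist u y
  obtain ⟨q₂, -, hq₂⟩ := hT.connected.exists_path_of_dist y v
  have hq : (q₁.append q₂).IsPath :=
    Walk.isPath_of_length_eq_dist _ (by rw [Walk.length_append, hq₁, hq₂, hy])
  have : q₁.append q₂ = p :=
    congrArg Subtype.val ((hT.isAcyclic.subsingleton_path u v).elim ⟨_, hq⟩ ⟨p, hp⟩)
  rw [← this, Walk.mem_support_append_iff]
  exact Or.inl q₁.end_mem_support

lemma IsTree.dist_eq_add_one_of_notMem_support (hT : T.IsTree) {a b v u : V} {p : T.Walk a b}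
    (hp : p.IsPath) (hv : v ∈ p.support) (hvu : T.Adj v u) (hu : u ∉ p.support) :
    T.dist a u = T.dist a v + 1 ∧ T.dist u b = T.dist v b + 1 := by
  have hv' := dist_add_dist_of_mem_support (hT.length_eq_dist hp) hv
  have hu' : T.dist a u + T.dist u b ≠ T.dist a b :=
    fun h => hu (hT.mem_support_of_dist_add_dist hp h)
  have h₁ := hT.dist_eq_dist_add_one_of_adj a hvu
  have h₂ := hT.dist_eq_dist_add_one_of_adj b hvu
  have h₃ := hT.connected.dist_triangle (u := a) (v := u) (w := b)
  rw [dist_comm (u := b), dist_comm (u := b)] at h₂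
  omega

lemma IsTree.exists_adj_mem_support (hT : T.IsTree) {a b v : V} {p : T.Walk a b}
    (hp : p.IsPath) (hv : v ∈ p.support) (hva : v ≠ a) :
    ∃ y ∈ p.support, T.Adj v y ∧ T.dist a y + 1 = T.dist a v := by
  have hv' := dist_add_dist_of_mem_support (hT.length_eq_dist hp) hv
  obtain ⟨y, hvy, hya⟩ := hT.connected.exists_adj_dist_add_one_eq hva
  have h₁ := hT.connected.dist_triangle (u := a) (v := y) (w := b)
  have h₂ := hT.connected.dist_triangle (u := y) (v := v) (w := b)
  rw [dist_comm (u := y), dist_comm (u := v) (v := a)] at hya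
  rw [dist_eq_one_iff_adj.2 hvy.symm] at h₂
  exact ⟨y, hT.mem_support_of_dist_add_dist hp (by omega), hvy, hya⟩

lemma IsTree.exists_adj_adj_of_mem_support (hT : T.IsTree) {a b v : V} {p : T.Walk a b}
    (hp : p.IsPath) (hv : v ∈ p.support) (hva : v ≠ a) (hvb : v ≠ b) :
    ∃ ya ∈ p.support, ∃ yb ∈ p.support, T.Adj v ya ∧ T.Adj v yb ∧ ya ≠ yb ∧
      T.dist a ya + 1 = T.dist a v ∧ T.dist yb b + 1 = T.dist v b := by
  have hv' := dist_add_dist_of_mem_support (hT.length_eq_dist hp) hv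
  obtain ⟨ya, hya, hvya, hdya⟩ := hT.exists_adj_mem_support hp hv hva
  obtain ⟨yb, hyb, hvyb, hdyb⟩ := hT.exists_adj_mem_support hp.reverse (by simpa using hv) hvb
  rw [Walk.support_reverse, List.mem_reverse] at hyb
  rw [dist_comm (u := b), dist_comm (u := b)] at hdyb
  have := hT.connected.dist_triangle (u := a) (v := yb) (w := b)
  exact ⟨ya, hya, yb, hyb, hvya, hvyb, by rintro rfl; omega, hdya, hdyb⟩

end Metric

section Branch

variable {V : Type*} [Fintype V]

/-- For an edge `PC` of a tree, the vertex set of the component of `T - PC` containing `C`. -/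
noncomputable def branch (T : SimpleGraph V) (P C : V) : Finset V :=
  univ.filter fun w => T.dist w C < T.dist w P

variable {T : SimpleGraph V} {P C w x : V}

@[simp]
lemma mem_branch : w ∈ T.branch P C ↔ T.dist w C < T.dist w P := by
  simp [branch]

lemma notMem_branch_self : P ∉ T.branch P C := by
  simp

lemma self_mem_branch (hPC : T.Adj P C) : C ∈ T.branch P C := by
  simp [dist_eq_one_iff_adj.2 hPC.symm]

lemma IsTree.dist_eq_of_mem_branch (hT : T.IsTree) (hPC : T.Adj P C)
    (hw : w ∈ T.branch P C) : T.dist w P = T.dist w C + 1 := by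
  have := hT.dist_eq_dist_add_one_of_adj w hPC
  rw [mem_branch] at hw
  omega

lemma IsTree.dist_eq_of_notMem_branch (hT : T.IsTree) (hPC : T.Adj P C)
    (hw : w ∉ T.branch P C) : T.dist w C = T.dist w P + 1 := by
  have := hT.dist_eq_dist_add_one_of_adj w hPC
  rw [mem_branch] at hw
  omega

lemma IsTree.dist_eq_of_mem_branch_of_notMem_branch (hT : T.IsTree)
    (hPC : T.Adj P C) (hw : w ∈ T.branch P C) (hx : x ∉ T.branch P C) :
    T.dist w x = T.dist w C + 1 + T.dist P x := by
  obtain ⟨p, hp, hpl⟩ := hT.connected.exists_path_of_dist w C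
  obtain ⟨q, hq, hql⟩ := hT.connected.exists_path_of_dist P x
  have hpB : ∀ y ∈ p.support, y ∈ T.branch P C := by
    intro y hy
    have h₁ := dist_add_dist_of_mem_support hpl hy
    have h₂ := hT.dist_eq_of_mem_branch hPC hw
    have h₃ := hT.connected.dist_triangle (u := w) (v := y) (w := P)
    rw [mem_branch]
    omega
  have hqB : ∀ y ∈ q.support, y ∉ T.branch P C := by
    intro y hy hyB
    have h₁ := dist_add_dist_of_mem_support hql hy
    have h₂ := hT.dist_eq_of_notMem_branch hPC hx
    have h₃ := hT.connected.dist_triangle (u := x) (v := y) (w := C)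
    rw [mem_branch] at hyB
    rw [dist_comm (u := P) (v := y), dist_comm (u := P) (v := x), dist_comm (u := y) (v := x)] at h₁
    omega
  have hpath : (p.append (Walk.cons hPC.symm q)).IsPath := by
    rw [Walk.isPath_def, Walk.support_append, Walk.support_cons, List.tail_cons]
    exact hp.support_nodup.append hq.support_nodup fun y hy hy' => hqB y hy' (hpB y hy)
  have := hT.length_eq_dist hpath
  rw [Walk.length_append, Walk.length_cons] at this
  omega

lemma IsTree.mem_branch_of_dist_add_dist (hT : T.IsTree) (hPC : T.Adj P C)
    {y z : V} (hw : w ∈ T.branch P C) (hz : z ∈ T.branch P C)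
    (hy : T.dist w y + T.dist y z = T.dist w z) : y ∈ T.branch P C := by
  by_contra hyB
  have h₁ := hT.dist_eq_of_mem_branch_of_notMem_branch hPC hw hyB
  have h₂ := hT.dist_eq_of_mem_branch_of_notMem_branch hPC hz hyB
  have h₃ := hT.connected.dist_triangle (u := w) (v := C) (w := z)
  rw [dist_comm (u := y) (v := z), dist_comm (u := C) (v := z)] at *
  omega

lemma IsTree.branch_subset_erase [DecidableEq V] (hT : T.IsTree) (hPC : T.Adj P C) {Q y : V}
    (hQy : T.Adj Q y) (hQ : Q ∈ T.branch P C) (hy : y ∈ T.branch P C) (hC : C ∉ T.branch Q y) :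
    T.branch Q y ⊆ (T.branch P C).erase C := by
  intro w hw
  refine Finset.mem_erase.2 ⟨by rintro rfl; exact hC hw, ?_⟩
  by_contra hwB
  have h₁ := hT.dist_eq_of_mem_branch_of_notMem_branch hPC hy hwB
  have h₂ := hT.dist_eq_of_mem_branch_of_notMem_branch hPC hQ hwB
  have h₃ := hT.dist_eq_of_mem_branch hQy hw
  rw [mem_branch] at hC
  rw [dist_comm (u := y) (v := w), dist_comm (u := Q) (v := w), dist_comm (u := C) (v := y),
    dist_comm (u := C) (v := Q)] at *
  omega

lemma IsTree.mem_branch_of_adj (hT : T.IsTree) (hPC : T.Adj P C) {c : V}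
    (hCc : T.Adj C c) (hcP : c ≠ P) : c ∈ T.branch P C := by
  have h₁ : T.dist c C = 1 := dist_eq_one_iff_adj.2 hCc.symm
  have h₂ := hT.dist_eq_dist_add_one_of_adj c hPC
  have h₃ : T.dist c P ≠ 0 := fun h => hcP ((hT.connected.dist_eq_zero_iff).1 h)
  rw [mem_branch]
  omega

lemma IsTree.branch_subset_erase_of_adj [DecidableEq V] (hT : T.IsTree) (hPC : T.Adj P C) {c : V}
    (hCc : T.Adj C c) (hcP : c ≠ P) : T.branch C c ⊆ (T.branch P C).erase C :=
  hT.branch_subset_erase hPC hCc (self_mem_branch hPC) (hT.mem_branch_of_adj hPC hCc hcP)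
    notMem_branch_self

lemma IsTree.disjoint_branch (hT : T.IsTree) {c c' : V} (hc : T.Adj C c)
    (hc' : T.Adj C c') (hne : c ≠ c') : Disjoint (T.branch C c) (T.branch C c') := by
  refine Finset.disjoint_left.2 fun w hw hw' => ?_
  have hc'B : c' ∉ T.branch C c := by
    rw [mem_branch, dist_eq_one_iff_adj.2 hc'.symm, Nat.lt_one_iff]
    exact fun h => hne ((hT.connected.dist_eq_zero_iff).1 h).symm
  have h₁ := hT.dist_eq_of_mem_branch_of_notMem_branch hc hw hc'B
  have h₂ := hT.dist_eq_of_mem_branch hc hw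
  rw [mem_branch] at hw'
  omega

lemma IsTree.exists_adj_mem_branch (hT : T.IsTree) (hwC : w ≠ C) :
    ∃ c, T.Adj C c ∧ w ∈ T.branch C c := by
  obtain ⟨c, hwc, hcC⟩ := hT.connected.exists_dist_eq_of_le (w := w) (z := C)
    (k := T.dist w C - 1) (Nat.sub_le _ _)
  have hpos := hT.connected.pos_dist_of_ne hwC
  refine ⟨c, ?_, ?_⟩
  · rw [← dist_eq_one_iff_adj, dist_comm]
    omega
  · rw [mem_branch]
    omega

lemma IsTree.exists_adj_ne_mem_branch (hT : T.IsTree) (hw : w ∈ T.branch P C) (hwC : w ≠ C) :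
    ∃ c, T.Adj C c ∧ c ≠ P ∧ w ∈ T.branch C c := by
  obtain ⟨c, hc, hwc⟩ := hT.exists_adj_mem_branch hwC
  refine ⟨c, hc, ?_, hwc⟩
  rintro rfl
  rw [mem_branch] at hw hwc
  omega

end Branch

section LocalBroadcast

variable {V : Type*} [Fintype V]

structure IsLocalBroadcast (T : SimpleGraph V) (P C : V) (f : V → ℕ) : Prop where
  support_subset : ∀ x, f x ≠ 0 → x ∈ T.branch P C
  mem_of_hears : ∀ w x, Hears T f w x → w ∈ T.branch P C ∨ w = P
  dominates : ∀ w ∈ T.branch P C, ∃ x, Hears T f w x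
  exists_isPrivateWitness : ∀ x, f x ≠ 0 → ∃ w ∈ T.branch P C, IsPrivateWitness T f x w

structure IsBranchBroadcast (T : SimpleGraph V) (P C : V) (f : V → ℕ) : Prop
    extends IsLocalBroadcast T P C f where
  /-- Only a one-vertex branch reaches `P`, so `P` stays available as a private witness for a
  broadcast on the other side of the edge. -/
  eq_singleton_of_hears : ∀ x, Hears T f P x → T.branch P C = {C}
  dist_le_cost : ∀ w ∈ T.branch P C, T.dist w C ≤ cost f

variable {T : SimpleGraph V} {P C : V}

lemma IsLocalBroadcast.one_le_cost {f : V → ℕ} (hf : IsLocalBroadcast T P C f)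
    (hPC : T.Adj P C) : 1 ≤ cost f := by
  obtain ⟨x, hx, -⟩ := hf.dominates C (self_mem_branch hPC)
  have := le_cost f x
  omega

variable {S : Finset V} {g : V → V → ℕ}

lemma IsTree.pairwiseDisjoint_support_branches (hT : T.IsTree) (hS : ∀ c ∈ S, T.Adj C c)
    (hg : ∀ c ∈ S, IsLocalBroadcast T C c (g c)) :
    (S : Set V).PairwiseDisjoint fun c => Function.support (g c) :=
  fun c hc c' hc' hne => Set.disjoint_left.2 fun x hx hx' =>
    Finset.disjoint_left.1 (hT.disjoint_branch (hS c hc) (hS c' hc') hne)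
      ((hg c hc).support_subset x hx) ((hg c' hc').support_subset x hx')

lemma IsTree.exists_isPrivateWitness_sum (hT : T.IsTree) (hS : ∀ c ∈ S, T.Adj C c)
    (hg : ∀ c ∈ S, IsLocalBroadcast T C c (g c)) {x : V} (hx : (∑ c ∈ S, g c) x ≠ 0) :
    ∃ c ∈ S, ∃ w ∈ T.branch C c, IsPrivateWitness T (∑ c ∈ S, g c) x w := by
  have hdisj := hT.pairwiseDisjoint_support_branches hS hg
  rw [Finset.sum_apply] at hx
  obtain ⟨c, hc, hcx⟩ := Finset.exists_ne_zero_of_sum_ne_zero hx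
  obtain ⟨w, hwB, hw⟩ := (hg c hc).exists_isPrivateWitness x hcx
  refine ⟨c, hc, w, hwB, hw.sum hdisj hc hcx fun c' hc' hne y hy => ?_⟩
  rcases (hg c' hc').mem_of_hears w y hy with h | rfl
  · exact Finset.disjoint_left.1 (hT.disjoint_branch (hS c hc) (hS c' hc') (Ne.symm hne)) hwB h
  · exact notMem_branch_self hwB

theorem IsTree.minimalDominatingBroadcast_sum [DecidableRel T.Adj] (hT : T.IsTree) {v : V}
    (hg : ∀ n, T.Adj v n → IsLocalBroadcast T v n (g n))
    (hv : ∃ n x, T.Adj v n ∧ Hears T (g n) v x) {n₁ n₂ : V} (h₁ : T.Adj v n₁)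
    (h₂ : T.Adj v n₂) (hne : n₁ ≠ n₂) :
    MinimalDominatingBroadcast T (∑ n ∈ T.neighborFinset v, g n) := by
  have hS : ∀ n ∈ T.neighborFinset v, T.Adj v n := fun n hn => (mem_neighborFinset _ _ _).1 hn
  have hmemS : ∀ n, T.Adj v n → n ∈ T.neighborFinset v :=
    fun n hn => (mem_neighborFinset _ _ _).2 hn
  have hgS : ∀ n ∈ T.neighborFinset v, IsLocalBroadcast T v n (g n) := fun n hn => hg n (hS n hn)
  have hdisj := hT.pairwiseDisjoint_support_branches hS hgS
  refine minimalDominatingBroadcast_of_isPrivateWitness (fun u => ?_) (fun x hx => ?_)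
    (fun x hx => ?_)
  · by_cases huv : u = v
    · obtain ⟨n, x, hn, hx⟩ := hv
      exact ⟨x, (hears_sum_iff hdisj).2 ⟨n, hmemS n hn, huv ▸ hx⟩⟩
    · obtain ⟨n, hn, hu⟩ := hT.exists_adj_mem_branch huv
      obtain ⟨x, hx⟩ := (hg n hn).dominates u hu
      exact ⟨x, (hears_sum_iff hdisj).2 ⟨n, hmemS n hn, hx⟩⟩
  · obtain ⟨-, -, w, -, hw⟩ := hT.exists_isPrivateWitness_sum hS hgS hx
    exact ⟨w, hw⟩
  · rw [Finset.sum_apply] at hx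
    obtain ⟨n, hn, hnx⟩ := Finset.exists_ne_zero_of_sum_ne_zero hx
    obtain ⟨n', hn', hn'n⟩ : ∃ n', T.Adj v n' ∧ n' ≠ n := by
      by_cases h : n₁ = n
      · exact ⟨n₂, h₂, fun h' => hne (h.trans h'.symm)⟩
      · exact ⟨n₁, h₁, h⟩
    obtain ⟨y, hy, -⟩ := (hg n' hn').dominates n' (self_mem_branch hn')
    refine ⟨y, ?_, by rwa [sum_apply_eq_of_ne_zero hdisj (hmemS n' hn') hy]⟩
    rintro rfl
    exact Finset.disjoint_left.1 (hT.disjoint_branch hn' (hS n hn) hn'n)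
      ((hg n' hn').support_subset _ hy) ((hgS n hn).support_subset _ hnx)

lemma IsBranchBroadcast.hears_of_eq_singleton {f : V → ℕ} (hf : IsBranchBroadcast T P C f)
    (hPC : T.Adj P C) (hleaf : T.branch P C = {C}) : Hears T f P C := by
  obtain ⟨x, hx, -⟩ := hf.dominates C (self_mem_branch hPC)
  have hxC : x = C := by simpa [hleaf] using hf.support_subset x hx
  subst hxC
  exact ⟨hx, by rw [dist_eq_one_iff_adj.2 hPC]; omega⟩

lemma IsTree.dist_le_cost_sum_children [DecidableEq V] [DecidableRel T.Adj]
    (hT : T.IsTree) (hg : ∀ c, T.Adj C c → c ≠ P → IsBranchBroadcast T C c (g c))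
    {c₀ : V} (hc₀ : T.Adj C c₀) (hc₀P : c₀ ≠ P) (hleaf : T.branch C c₀ = {c₀}) {w c : V}
    (hc : T.Adj C c) (hcP : c ≠ P) (hwc : w ∈ T.branch C c) :
    T.dist w C ≤ ∑ c ∈ (T.neighborFinset C).erase P, cost (g c) := by
  have hmemS : ∀ c, T.Adj C c → c ≠ P → c ∈ (T.neighborFinset C).erase P :=
    fun c h₁ h₂ => by simpa using ⟨h₂, h₁⟩
  have h₁ := hT.dist_eq_of_mem_branch hc hwc
  have h₂ := (hg c hc hcP).dist_le_cost w hwc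
  have h₀ := (hg c₀ hc₀ hc₀P).one_le_cost hc₀
  by_cases hcc₀ : c = c₀
  · subst hcc₀
    rw [hleaf, Finset.mem_singleton] at hwc
    subst hwc
    have := Finset.single_le_sum (f := fun c => cost (g c)) (fun _ _ => Nat.zero_le _)
      (hmemS w hc hcP)
    simp only [dist_self] at h₁ this
    omega
  · have := Finset.sum_le_sum_of_subset (f := fun c => cost (g c))
      (show {c, c₀} ⊆ (T.neighborFinset C).erase P by
        simp [Finset.insert_subset_iff, hc, hcP, hc₀, hc₀P])
    rw [Finset.sum_pair hcc₀] at this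
    omega

lemma IsTree.isBranchBroadcast_sum_children [DecidableEq V] [DecidableRel T.Adj] (hT : T.IsTree)
    (hPC : T.Adj P C) (hg : ∀ c, T.Adj C c → c ≠ P → IsBranchBroadcast T C c (g c))
    {c₀ : V} (hc₀ : T.Adj C c₀) (hc₀P : c₀ ≠ P) (hleaf : T.branch C c₀ = {c₀}) :
    IsBranchBroadcast T P C (∑ c ∈ (T.neighborFinset C).erase P, g c) := by
  set S := (T.neighborFinset C).erase P
  have hS : ∀ c ∈ S, T.Adj C c ∧ c ≠ P := fun c hc => by simpa [S, and_comm] using hc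
  have hmemS : ∀ c, T.Adj C c → c ≠ P → c ∈ S := fun c h₁ h₂ => by simpa [S] using ⟨h₂, h₁⟩
  have hgS : ∀ c ∈ S, IsLocalBroadcast T C c (g c) :=
    fun c hc => (hg c (hS c hc).1 (hS c hc).2).1
  have hdisj := hT.pairwiseDisjoint_support_branches (fun c hc => (hS c hc).1) hgS
  have hsub : ∀ c ∈ S, T.branch C c ⊆ T.branch P C := fun c hc =>
    (hT.branch_subset_erase_of_adj hPC (hS c hc).1 (hS c hc).2).trans (Finset.erase_subset _ _)
  have hmem : ∀ w x, Hears T (∑ c ∈ S, g c) w x → w ∈ T.branch P C := by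
    intro w x h
    obtain ⟨c, hc, hcx⟩ := (hears_sum_iff hdisj).1 h
    rcases (hgS c hc).mem_of_hears w x hcx with h | rfl
    exacts [hsub c hc h, self_mem_branch hPC]
  refine ⟨⟨fun x hx => ?_, fun w x h => Or.inl (hmem w x h), fun w hw => ?_, fun x hx => ?_⟩,
    fun x h => absurd (hmem P x h) notMem_branch_self, fun w hw => ?_⟩
  · rw [Finset.sum_apply] at hx
    obtain ⟨c, hc, hcx⟩ := Finset.exists_ne_zero_of_sum_ne_zero hx
    exact hsub c hc ((hgS c hc).support_subset x hcx)
  · by_cases hwC : w = C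
    · subst hwC
      exact ⟨c₀, (hears_sum_iff hdisj).2
        ⟨c₀, hmemS c₀ hc₀ hc₀P, (hg c₀ hc₀ hc₀P).hears_of_eq_singleton hc₀ hleaf⟩⟩
    · obtain ⟨c, hc, hcP, hwc⟩ := hT.exists_adj_ne_mem_branch hw hwC
      obtain ⟨x, hx⟩ := (hgS c (hmemS c hc hcP)).dominates w hwc
      exact ⟨x, (hears_sum_iff hdisj).2 ⟨c, hmemS c hc hcP, hx⟩⟩
  · obtain ⟨c, hc, w, hw, hpw⟩ :=
      hT.exists_isPrivateWitness_sum (fun c hc => (hS c hc).1) hgS hx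
    exact ⟨w, hsub c hc hw, hpw⟩
  · rw [cost_sum]
    by_cases hwC : w = C
    · simp [hwC]
    · obtain ⟨c, hc, hcP, hwc⟩ := hT.exists_adj_ne_mem_branch hw hwC
      exact hT.dist_le_cost_sum_children hg hc₀ hc₀P hleaf hc hcP hwc

end LocalBroadcast

section Fringe

variable {V : Type*} [Fintype V] {T : SimpleGraph V} {P C z Q y w : V} {r : ℕ}

noncomputable def fringe (T : SimpleGraph V) (P C z : V) (r : ℕ) : Finset V :=
  (T.branch P C).filter fun y => T.dist y z = r + 1

lemma mem_fringe : y ∈ T.fringe P C z r ↔ y ∈ T.branch P C ∧ T.dist y z = r + 1 :=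
  Finset.mem_filter

lemma IsTree.dist_eq_of_mem_branch_of_dist_eq (hT : T.IsTree) (hQy : T.Adj Q y)
    (hQz : T.dist Q z = r) (hyz : T.dist y z = r + 1) (hw : w ∈ T.branch Q y) :
    T.dist w z = T.dist w y + 1 + r := by
  have hz : z ∉ T.branch Q y := by
    rw [mem_branch, dist_comm, hyz, dist_comm, hQz]
    omega
  rw [hT.dist_eq_of_mem_branch_of_notMem_branch hQy hw hz, hQz]

lemma IsTree.mem_branch_of_mem_fringe (hT : T.IsTree) (hPC : T.Adj P C)
    (hz : z ∈ T.branch P C) (hy : y ∈ T.fringe P C z r) (hQy : T.Adj Q y)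
    (hQz : T.dist Q z = r) : Q ∈ T.branch P C :=
  hT.mem_branch_of_dist_add_dist hPC (mem_fringe.1 hy).1 hz
    (by rw [dist_eq_one_iff_adj.2 hQy.symm, hQz, (mem_fringe.1 hy).2, add_comm])

lemma IsTree.branch_subset_erase_of_mem_fringe [DecidableEq V] (hT : T.IsTree)
    (hPC : T.Adj P C) (hz : z ∈ T.branch P C) (hCz : T.dist C z ≤ r)
    (hy : y ∈ T.fringe P C z r) (hQy : T.Adj Q y) (hQz : T.dist Q z = r) :
    T.branch Q y ⊆ (T.branch P C).erase C :=
  hT.branch_subset_erase hPC hQy (hT.mem_branch_of_mem_fringe hPC hz hy hQy hQz)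
    (mem_fringe.1 hy).1 fun hC => by
      have := hT.dist_eq_of_mem_branch_of_dist_eq hQy hQz (mem_fringe.1 hy).2 hC
      omega

lemma IsTree.disjoint_branch_of_dist_eq (hT : T.IsTree) {Q' y' : V}
    (hQy : T.Adj Q y) (hQz : T.dist Q z = r) (hyz : T.dist y z = r + 1)
    (hQy' : T.Adj Q' y') (hQz' : T.dist Q' z = r) (hyz' : T.dist y' z = r + 1) (hne : y ≠ y') :
    Disjoint (T.branch Q y) (T.branch Q' y') := by
  refine Finset.disjoint_left.2 fun w hw hw' => ?_
  have hy'B : y' ∉ T.branch Q y := fun h => by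
    have := hT.dist_eq_of_mem_branch_of_dist_eq hQy hQz hyz h
    exact hne ((hT.connected.dist_eq_zero_iff).1 (by omega)).symm
  have hyB : y ∉ T.branch Q' y' := fun h => by
    have := hT.dist_eq_of_mem_branch_of_dist_eq hQy' hQz' hyz' h
    exact hne ((hT.connected.dist_eq_zero_iff).1 (by omega))
  have h₁ := hT.dist_eq_of_mem_branch_of_notMem_branch hQy hw hy'B
  have h₂ := hT.dist_eq_of_mem_branch_of_notMem_branch hQy' hw' hyB
  omega

variable {Q : V → V}

lemma IsTree.exists_mem_fringe (hT : T.IsTree) (hPC : T.Adj P C)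
    (hz : z ∈ T.branch P C) (hw : w ∈ T.branch P C) (hwz : r < T.dist w z)
    (hQ : ∀ y ∈ T.fringe P C z r, T.Adj (Q y) y ∧ T.dist (Q y) z = r) :
    ∃ y ∈ T.fringe P C z r, w ∈ T.branch (Q y) y := by
  obtain ⟨y, hwy, hyz⟩ := hT.connected.exists_dist_eq_of_le (w := w) (z := z)
    (k := T.dist w z - (r + 1)) (Nat.sub_le _ _)
  have hy : y ∈ T.fringe P C z r :=
    mem_fringe.2 ⟨hT.mem_branch_of_dist_add_dist hPC hw hz (by omega), by omega⟩
  have h₁ := (hQ y hy).2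
  have h₂ := hT.connected.dist_triangle (u := w) (v := Q y) (w := z)
  exact ⟨y, hy, by rw [mem_branch]; omega⟩

structure IsFringeBroadcast (T : SimpleGraph V) (P C z : V) (r : ℕ) (φ : V → ℕ) : Prop where
  support_subset : ∀ x, φ x ≠ 0 → x ∈ T.branch P C ∧ r < T.dist x z
  mem_of_hears : ∀ w x, Hears T φ w x → w ∈ T.branch P C ∧ r ≤ T.dist w z
  dominates : ∀ w ∈ T.branch P C, r < T.dist w z → ∃ x, Hears T φ w x
  exists_isPrivateWitness :
    ∀ x, φ x ≠ 0 → ∃ w ∈ T.branch P C, r < T.dist w z ∧ IsPrivateWitness T φ x w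

variable {f : V → V → ℕ}

lemma IsTree.pairwiseDisjoint_support_fringe (hT : T.IsTree)
    (hQ : ∀ y ∈ T.fringe P C z r, T.Adj (Q y) y ∧ T.dist (Q y) z = r)
    (hf : ∀ y ∈ T.fringe P C z r, IsLocalBroadcast T (Q y) y (f y)) :
    (T.fringe P C z r : Set V).PairwiseDisjoint fun y => Function.support (f y) :=
  fun y hy y' hy' hne => Set.disjoint_left.2 fun x hx hx' =>
    Finset.disjoint_left.1 (hT.disjoint_branch_of_dist_eq (hQ y hy).1 (hQ y hy).2
      (mem_fringe.1 hy).2 (hQ y' hy').1 (hQ y' hy').2 (mem_fringe.1 hy').2 hne)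
      ((hf y hy).support_subset x hx) ((hf y' hy').support_subset x hx')

lemma IsTree.isFringeBroadcast_sum (hT : T.IsTree) (hPC : T.Adj P C)
    (hz : z ∈ T.branch P C) (hCz : T.dist C z ≤ r)
    (hQ : ∀ y ∈ T.fringe P C z r, T.Adj (Q y) y ∧ T.dist (Q y) z = r)
    (hf : ∀ y ∈ T.fringe P C z r, IsLocalBroadcast T (Q y) y (f y)) :
    IsFringeBroadcast T P C z r (∑ y ∈ T.fringe P C z r, f y) := by
  classical
  have hdisj := hT.pairwiseDisjoint_support_fringe hQ hf
  have hfar : ∀ y ∈ T.fringe P C z r, ∀ w ∈ T.branch (Q y) y,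
      w ∈ T.branch P C ∧ r < T.dist w z := fun y hy w hw =>
    ⟨Finset.mem_of_mem_erase (hT.branch_subset_erase_of_mem_fringe hPC hz hCz hy
      (hQ y hy).1 (hQ y hy).2 hw), by
      have := hT.dist_eq_of_mem_branch_of_dist_eq (hQ y hy).1 (hQ y hy).2 (mem_fringe.1 hy).2 hw
      omega⟩
  refine ⟨fun x hx => ?_, fun w x h => ?_, fun w hw hwz => ?_, fun x hx => ?_⟩
  · rw [Finset.sum_apply] at hx
    obtain ⟨y, hy, hyx⟩ := Finset.exists_ne_zero_of_sum_ne_zero hx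
    exact hfar y hy x ((hf y hy).support_subset x hyx)
  · obtain ⟨y, hy, hyx⟩ := (hears_sum_iff hdisj).1 h
    rcases (hf y hy).mem_of_hears w x hyx with h | rfl
    · exact ⟨(hfar y hy w h).1, (hfar y hy w h).2.le⟩
    · exact ⟨hT.mem_branch_of_mem_fringe hPC hz hy (hQ y hy).1 (hQ y hy).2, (hQ y hy).2.ge⟩
  · obtain ⟨y, hy, hwy⟩ := hT.exists_mem_fringe hPC hz hw hwz hQ
    obtain ⟨x, hx⟩ := (hf y hy).dominates w hwy
    exact ⟨x, (hears_sum_iff hdisj).2 ⟨y, hy, hx⟩⟩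
  · rw [Finset.sum_apply] at hx
    obtain ⟨y, hy, hyx⟩ := Finset.exists_ne_zero_of_sum_ne_zero hx
    obtain ⟨w, hw, hpw⟩ := (hf y hy).exists_isPrivateWitness x hyx
    refine ⟨w, (hfar y hy w hw).1, (hfar y hy w hw).2,
      hpw.sum hdisj hy hyx fun y' hy' hne x' h => ?_⟩
    rcases (hf y' hy').mem_of_hears w x' h with h | rfl
    · exact Finset.disjoint_left.1 (hT.disjoint_branch_of_dist_eq (hQ y hy).1 (hQ y hy).2
        (mem_fringe.1 hy).2 (hQ y' hy').1 (hQ y' hy').2 (mem_fringe.1 hy').2 (Ne.symm hne)) hw h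
    · have := (hfar y hy _ hw).2
      have := (hQ y' hy').2
      omega

variable {φ : V → ℕ}

lemma IsFringeBroadcast.disjoint_support_single [DecidableEq V]
    (hφ : IsFringeBroadcast T P C z r φ) :
    Disjoint (Function.support (Pi.single z r)) (Function.support φ) :=
  Set.disjoint_of_subset_left (Pi.support_single_subset) <| Set.disjoint_singleton_left.2
    fun h => by simpa using (hφ.support_subset z h).2

lemma IsFringeBroadcast.hears_single_add_iff [DecidableEq V]
    (hφ : IsFringeBroadcast T P C z r φ) {w x : V} :
    Hears T (Pi.single z r + φ) w x ↔ (x = z ∧ r ≠ 0 ∧ T.dist w z ≤ r) ∨ Hears T φ w x := by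
  rw [hears_add_iff hφ.disjoint_support_single, hears_single_iff]

lemma IsTree.isLocalBroadcast_single_add [DecidableEq V] (hT : T.IsTree)
    (hPC : T.Adj P C) (hz : z ∈ T.branch P C) (hr : r ≠ 0) (hrC : r ≤ T.dist C z + 1)
    (hφ : IsFringeBroadcast T P C z r φ) {w₀ : V} (hw₀ : w₀ ∈ T.branch P C)
    (hw₀z : r = 1 ∨ r ≤ T.dist w₀ z) (hw₀φ : ∀ x, ¬ Hears T φ w₀ x) :
    IsLocalBroadcast T P C (Pi.single z r + φ) := by
  have hdisj := hφ.disjoint_support_single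
  refine ⟨fun x hx => ?_, fun w x h => ?_, fun w hw => ?_, fun x hx => ?_⟩
  · by_cases hxz : x = z
    · exact hxz ▸ hz
    · exact (hφ.support_subset x (by simpa [hxz] using hx)).1
  · rcases hφ.hears_single_add_iff.1 h with ⟨-, -, hwz⟩ | h
    · by_contra! hw
      have h₁ := hT.dist_eq_of_mem_branch_of_notMem_branch hPC hz hw.1
      have h₂ : T.dist P w ≠ 0 := fun h => hw.2 ((hT.connected.dist_eq_zero_iff).1 h).symm
      rw [dist_comm] at hwz
      rw [dist_comm (u := z) (v := C)] at h₁
      omega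
    · exact Or.inl (hφ.mem_of_hears w x h).1
  · by_cases hwz : T.dist w z ≤ r
    · exact ⟨z, hφ.hears_single_add_iff.2 (Or.inl ⟨rfl, hr, hwz⟩)⟩
    · obtain ⟨x, hx⟩ := hφ.dominates w hw (by omega)
      exact ⟨x, hφ.hears_single_add_iff.2 (Or.inr hx)⟩
  · by_cases hxz : x = z
    · subst hxz
      refine ⟨w₀, hw₀, IsPrivateWitness.add hdisj (by simpa using hr)
        ⟨by simpa using hw₀z, fun y hy h => hy (hears_single_iff.1 h).1⟩ hw₀φ⟩
    · have hφx : φ x ≠ 0 := by simpa [hxz] using hx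
      obtain ⟨w, hw, hwz, hpw⟩ := hφ.exists_isPrivateWitness x hφx
      refine ⟨w, hw, ?_⟩
      rw [add_comm]
      refine hpw.add hdisj.symm hφx fun y h => ?_
      have := (hears_single_iff.1 h).2.2
      omega

end Fringe

section Construction

variable {V : Type*} [Fintype V] {T : SimpleGraph V} {P C : V}

lemma IsTree.exists_fringe_pieces [DecidableEq V] (hT : T.IsTree) (hPC : T.Adj P C)
    {z : V} {r : ℕ} (hz : z ∈ T.branch P C) (hCz : T.dist C z ≤ r)
    {R : V → V → (V → ℕ) → Prop}
    (IH : ∀ Q y, T.Adj Q y → T.branch Q y ⊆ (T.branch P C).erase C → ∃ f, R Q y f) :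
    ∃ (Q : V → V) (f : V → V → ℕ), ∀ y ∈ T.fringe P C z r,
      (T.Adj (Q y) y ∧ T.dist (Q y) z = r) ∧ R (Q y) y (f y) := by
  have hQ : ∀ y ∈ T.fringe P C z r, ∃ Q, T.Adj Q y ∧ T.dist Q z = r := fun y hy => by
    have hyz := (mem_fringe.1 hy).2
    obtain ⟨Q, hyQ, hQz⟩ := hT.connected.exists_adj_dist_add_one_eq (w := y) (z := z)
      (by rintro rfl; simp at hyz)
    exact ⟨Q, hyQ.symm, by omega⟩
  choose! Q hQ using hQ
  have hf : ∀ y ∈ T.fringe P C z r, ∃ f, R (Q y) y f := fun y hy =>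
    IH _ _ (hQ y hy).1 (hT.branch_subset_erase_of_mem_fringe hPC hz hCz hy (hQ y hy).1 (hQ y hy).2)
  choose! f hf using hf
  exact ⟨Q, f, fun y hy => ⟨hQ y hy, hf y hy⟩⟩

lemma IsTree.exists_isLocalBroadcast_apply_eq_one [DecidableEq V] (hT : T.IsTree)
    (hPC : T.Adj P C)
    (IH : ∀ Q y, T.Adj Q y → T.branch Q y ⊆ (T.branch P C).erase C →
      ∃ f, IsLocalBroadcast T Q y f) :
    ∃ f, IsLocalBroadcast T P C f ∧ f C = 1 := by
  have hC := self_mem_branch hPC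
  obtain ⟨Q, f, hQf⟩ := hT.exists_fringe_pieces hPC hC (r := 1) (by simp) IH
  have hφ := hT.isFringeBroadcast_sum hPC hC (by simp) (fun y hy => (hQf y hy).1)
    (fun y hy => (hQf y hy).2)
  have hφC : (∑ y ∈ T.fringe P C C 1, f y) C = 0 := by
    by_contra h
    simpa using (hφ.support_subset C h).2
  refine ⟨_, hT.isLocalBroadcast_single_add hPC hC one_ne_zero (by simp) hφ hC (Or.inl rfl)
    fun x h => ?_, by simp [hφC]⟩
  simpa using (hφ.mem_of_hears C x h).2

lemma IsTree.exists_isBranchBroadcast_of_forall_ne_singleton [DecidableEq V]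
    (hT : T.IsTree) (hPC : T.Adj P C) (hbig : T.branch P C ≠ {C})
    (hnp : ∀ c, T.Adj C c → c ≠ P → T.branch C c ≠ {c})
    (IH : ∀ Q y, T.Adj Q y → T.branch Q y ⊆ (T.branch P C).erase C →
      ∃ f, IsBranchBroadcast T Q y f) :
    ∃ f, IsBranchBroadcast T P C f := by
  obtain ⟨z, hz, hzmax⟩ := Finset.exists_max_image (T.branch P C) (fun w => T.dist w C)
    ⟨C, self_mem_branch hPC⟩
  have hr : T.dist z C ≠ 0 := fun h => hbig <| Finset.eq_singleton_iff_unique_mem.2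
    ⟨self_mem_branch hPC, fun w hw =>
      (hT.connected.dist_eq_zero_iff).1 (by have := hzmax w hw; omega)⟩
  have hCz : T.dist C z = T.dist z C := dist_comm
  obtain ⟨Q, f, hQf⟩ := hT.exists_fringe_pieces hPC hz hCz.le IH
  have hQ := fun y hy => (hQf y hy).1
  have hφ := hT.isFringeBroadcast_sum hPC hz hCz.le hQ fun y hy => (hQf y hy).2.1
  have hCφ : ∀ x, ¬ Hears T (∑ y ∈ T.fringe P C z (T.dist z C), f y) C x := by
    intro x h
    obtain ⟨y, hy, hyx⟩ :=
      (hears_sum_iff (hT.pairwiseDisjoint_support_fringe hQ fun y hy => (hQf y hy).2.1)).1 h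
    -- `C` is out of reach of the fringe branches, except as the parent of a leaf child.
    rcases (hQf y hy).2.1.mem_of_hears C x hyx with hC | hC
    · exact (Finset.mem_erase.1 (hT.branch_subset_erase_of_mem_fringe hPC hz hCz.le hy
        (hQ y hy).1 (hQ y hy).2 hC)).1 rfl
    · have hleaf := (hQf y hy).2.eq_singleton_of_hears x (by rwa [← hC])
      rw [← hC] at hleaf
      refine hnp y (by rw [hC]; exact (hQ y hy).1) ?_ hleaf
      rintro rfl
      exact notMem_branch_self (mem_fringe.1 hy).1
  refine ⟨_, hT.isLocalBroadcast_single_add hPC hz hr (by omega) hφ (self_mem_branch hPC)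
    (Or.inr hCz.ge) hCφ, fun x h => ?_, fun w hw => ?_⟩
  · rcases hφ.hears_single_add_iff.1 h with ⟨-, -, hPz⟩ | h
    · have := hT.dist_eq_of_mem_branch hPC hz
      rw [dist_comm] at hPz
      omega
    · exact absurd (hφ.mem_of_hears P x h).1 notMem_branch_self
  · have h₁ := hzmax w hw
    have h₂ := le_cost (Pi.single z (T.dist z C) + ∑ y ∈ T.fringe P C z (T.dist z C), f y) z
    simp only [Pi.add_apply, Pi.single_eq_same] at h₂
    omega

theorem IsTree.exists_isBranchBroadcast (hT : T.IsTree) (hPC : T.Adj P C) :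
    ∃ f, IsBranchBroadcast T P C f := by
  classical
  induction hn : (T.branch P C).card using Nat.strong_induction_on generalizing P C with
  | _ n ih =>
  have IH : ∀ Q y, T.Adj Q y → T.branch Q y ⊆ (T.branch P C).erase C →
      ∃ f, IsBranchBroadcast T Q y f := fun Q y hQy hsub =>
    ih _ (hn ▸ Finset.card_lt_card (hsub.trans_ssubset
      (Finset.erase_ssubset (self_mem_branch hPC)))) hQy rfl
  by_cases hleaf : T.branch P C = {C}
  · obtain ⟨f, hf, -⟩ := hT.exists_isLocalBroadcast_apply_eq_one hPC fun Q y hQy hsub =>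
      (IH Q y hQy hsub).imp fun _ h => h.1
    exact ⟨f, hf, fun _ _ => hleaf, by simp [hleaf]⟩
  by_cases hpend : ∃ c, T.Adj C c ∧ c ≠ P ∧ T.branch C c = {c}
  · obtain ⟨c₀, hc₀, hc₀P, hc₀leaf⟩ := hpend
    choose! g hg using fun c (hc : T.Adj C c) (hcP : c ≠ P) =>
      IH C c hc (hT.branch_subset_erase_of_adj hPC hc hcP)
    exact ⟨_, hT.isBranchBroadcast_sum_children hPC hg hc₀ hc₀P hc₀leaf⟩
  · push Not at hpend
    exact hT.exists_isBranchBroadcast_of_forall_ne_singleton hPC hleaf hpend IH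

theorem IsTree.exists_minimalDominatingBroadcast_sum [DecidableEq V] [DecidableRel T.Adj]
    (hT : T.IsTree) {v u₁ u₂ : V}
    (h₁ : T.Adj v u₁) (h₂ : T.Adj v u₂) (h₁₂ : u₁ ≠ u₂) :
    ∃ g : V → V → ℕ, MinimalDominatingBroadcast T (∑ n ∈ T.neighborFinset v, g n) ∧
      (∀ n, T.Adj v n → 1 ≤ cost (g n)) ∧
      ∀ n, T.Adj v n → n ≠ u₁ → ∀ w ∈ T.branch v n, T.dist w n ≤ cost (g n) := by
  choose! G hG using fun n (hn : T.Adj v n) => hT.exists_isBranchBroadcast hn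
  obtain ⟨F, hF, hFu⟩ := hT.exists_isLocalBroadcast_apply_eq_one h₁ fun Q y hQy _ =>
    (hT.exists_isBranchBroadcast hQy).imp fun _ h => h.1
  have hg : ∀ n, T.Adj v n → IsLocalBroadcast T v n (Function.update G u₁ F n) := fun n hn => by
    by_cases h : n = u₁
    · subst h
      simpa using hF
    · simpa [h] using (hG n hn).1
  refine ⟨Function.update G u₁ F, hT.minimalDominatingBroadcast_sum hg ⟨u₁, u₁, h₁, ?_⟩ h₁ h₂ h₁₂,
    fun n hn => (hg n hn).one_le_cost hn, fun n hn hnu w hw => ?_⟩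
  · simp [Hears, hFu, dist_eq_one_iff_adj.2 h₁]
  · simpa [hnu] using (hG n hn).dist_le_cost w hw

end Construction

end SimpleGraph

/-- If a vertex `v` on a diametral path `D` of a tree `T` has at least three distinct
neighbors off `D`, then `Γ_b(T) > diam(T)`. -/
theorem tree_three_protrusions_not_diametrical {V : Type*} [Fintype V] (T : SimpleGraph V)
    (hT : T.IsTree) {a b : V} (p : T.Walk a b) (hp : p.IsPath)
    (hlen : p.length = gDiam T)
    (v u1 u2 u3 : V) (hv : v ∈ p.support)
    (h1 : T.Adj v u1) (h2 : T.Adj v u2) (h3 : T.Adj v u3)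
    (h12 : u1 ≠ u2) (h13 : u1 ≠ u3) (h23 : u2 ≠ u3)
    (hu1 : u1 ∉ p.support) (hu2 : u2 ∉ p.support) (hu3 : u3 ∉ p.support) :
    gDiam T < upperBroadcast T := by
  classical
  have hvab := dist_add_dist_of_mem_support (hT.length_eq_dist hp) hv
  rw [← hT.length_eq_dist hp, hlen] at hvab
  obtain ⟨ha₁, hb₁⟩ := hT.dist_eq_add_one_of_notMem_support hp hv h1 hu1
  have := dist_le_gDiam (G := T) a u1
  have := dist_le_gDiam (G := T) u1 b
  obtain ⟨ya, hya, yb, hyb, hvya, hvyb, hyayb, hdya, hdyb⟩ := hT.exists_adj_adj_of_mem_support hp hv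
    (by rintro rfl; simp at *; omega) (by rintro rfl; simp at *; omega)
  have hne : ∀ u ∉ p.support, ya ≠ u ∧ yb ≠ u :=
    fun u hu => ⟨by rintro rfl; exact hu hya, by rintro rfl; exact hu hyb⟩
  obtain ⟨g, hmin, hone, hheight⟩ := hT.exists_minimalDominatingBroadcast_sum h1 h2 h12
  have hga := hheight ya hvya (hne u1 hu1).1 a (by rw [mem_branch]; omega)
  have hgb := hheight yb hvyb (hne u1 hu1).2 b
    (by rw [mem_branch, dist_comm, dist_comm (u := b)]; omega)
  rw [dist_comm] at hgb
  refine lt_of_lt_of_le ?_ ((cost_sum _ _).symm.trans_le (cost_le_upperBroadcast hmin))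
  refine lt_of_lt_of_le ?_ (Finset.sum_le_sum_of_subset (s := {ya, yb, u1, u2, u3})
    (by simp [Finset.insert_subset_iff, h1, hvya, hvyb, h2, h3]))
  rw [Finset.sum_insert (by simp [hyayb, hne u1 hu1, hne u2 hu2, hne u3 hu3]),
    Finset.sum_insert (by simp [hne u1 hu1, hne u2 hu2, hne u3 hu3]),
    Finset.sum_insert (by simp [h12, h13]), Finset.sum_pair h23]
  have := hone u1 h1
  have := hone u2 h2
  have := hone u3 h3
  omega
end
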